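/- arXiv:1404.0151 — 5 statements merged into one kernel-verified Lean document; each statement's English description precedes it below -/
import Mathlib

section
/- Let G be a digraph, b a vertex, and I a set of vertices not containing b. If there is a family of pairwise edge-disjoint directed paths or rays (Q_v | v ∈ I), where Q_v starts at v and either ends at b or dominates b (a ray dominates b if there are infinitely many pairwise edge-disjoint directed paths from it to b; a path dominates b if its last vertex has infinitely many directed paths to b that are edge-disjoint except at that vertex), then every finite subset S of I can be linked to b by |S| pairwise edge-disjoint directed paths, each starting at a distinct vertex of S and ending at b. -/
/-- A (finite) directed path in the digraph with adjacency `Adj`: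
a nonempty list of distinct vertices whose consecutive pairs are edges. -/
structure DiPath {V : Type*} (Adj : V → V → Prop) : Type _ where
  verts : List V
  ne : verts ≠ []
  chain : verts.Chain' Adj
  nodup : verts.Nodup

namespace DiPath
variable {V : Type*} {Adj : V → V → Prop}
/-- The first vertex of a directed path. -/
def first (P : DiPath Adj) : V := P.verts.head P.ne
/-- The last vertex of a directed path. -/
def last (P : DiPath Adj) : V := P.verts.getLast P.ne
/-- The (directed) edges of a path, as ordered pairs of consecutive vertices. -/
def edges (P : DiPath Adj) : List (V × V) := P.verts.zip P.verts.tail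
/-- The edge set of a path. -/
def edgeSet (P : DiPath Adj) : Set (V × V) := {e | e ∈ P.edges}
/-- The vertex set of a path. -/
def vertexSet (P : DiPath Adj) : Set V := {v | v ∈ P.verts}
end DiPath

/-- A directed ray: a one-way infinite directed path. -/
structure DiRay {V : Type*} (Adj : V → V → Prop) : Type _ where
  f : ℕ → V
  inj : Function.Injective f
  adj : ∀ n, Adj (f n) (f (n + 1))

namespace DiRay
variable {V : Type*} {Adj : V → V → Prop}
/-- The first vertex of a ray. -/
def first (R : DiRay Adj) : V := R.f 0
/-- The edge set of a ray. -/
def edgeSet (R : DiRay Adj) : Set (V × V) := Set.range fun n => (R.f n, R.f (n + 1))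
/-- The vertex set of a ray. -/
def vertexSet (R : DiRay Adj) : Set V := Set.range R.f
end DiRay

/-- A path or a ray. -/
inductive PR {V : Type*} (Adj : V → V → Prop) : Type _
  | path : DiPath Adj → PR Adj
  | ray : DiRay Adj → PR Adj

namespace PR
variable {V : Type*} {Adj : V → V → Prop}
/-- The first vertex. -/
def first : PR Adj → V
  | .path P => P.first
  | .ray R => R.first
/-- The edge set. -/
def edgeSet : PR Adj → Set (V × V)
  | .path P => P.edgeSet
  | .ray R => R.edgeSet
/-- The vertex set. -/
def vertexSet : PR Adj → Set V
  | .path P => P.vertexSet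
  | .ray R => R.vertexSet
end PR

/-- A vertex `v` dominates `b` (edge version): there are infinitely many
pairwise edge-disjoint directed `v`–`b` paths. -/
def VDom {V : Type*} (Adj : V → V → Prop) (b v : V) : Prop :=
  ∃ P : ℕ → DiPath Adj, Function.Injective P ∧ (∀ n, (P n).first = v) ∧
    (∀ n, (P n).last = b) ∧ ∀ m n, m ≠ n → Disjoint (P m).edgeSet (P n).edgeSet

/-- A ray `R` dominates `b` (edge version): there are infinitely many pairwise
edge-disjoint directed paths from `R` to `b`. -/
def RDom {V : Type*} (Adj : V → V → Prop) (b : V) (R : DiRay Adj) : Prop :=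
  ∃ P : ℕ → DiPath Adj, Function.Injective P ∧ (∀ n, (P n).first ∈ R.vertexSet) ∧
    (∀ n, (P n).last = b) ∧ ∀ m n, m ≠ n → Disjoint (P m).edgeSet (P n).edgeSet

/-- A path or ray is good for `b` if it ends at `b` or dominates `b`
(a path dominates `b` if its last vertex does; a ray dominates as a ray). -/
def PR.Good {V : Type*} {Adj : V → V → Prop} (b : V) : PR Adj → Prop
  | .path P => P.last = b ∨ VDom Adj b P.last
  | .ray R => RDom Adj b R

/-- A domination linkage (edge version) from `I` to `b`: pairwise edge-disjoint
paths or rays, one starting at each vertex of `I`, each ending at `b` or dominating `b`. -/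
def DomLinkage {V : Type*} (Adj : V → V → Prop) (b : V) (I : Set V) : Prop :=
  ∃ Q : I → PR Adj, (∀ v : I, (Q v).first = (v : V)) ∧ (∀ v, (Q v).Good b) ∧
    ∀ v w : I, v ≠ w → Disjoint (Q v).edgeSet (Q w).edgeSet

/-- The finite set `S` can be linked to `b` by pairwise edge-disjoint directed paths,
one starting at each vertex of `S`, each ending at `b`. -/
def FinLinked {V : Type*} (Adj : V → V → Prop) (b : V) (S : Finset V) : Prop :=
  ∃ P : S → DiPath Adj, (∀ s, (P s).first = (s : V)) ∧ (∀ s, (P s).last = b) ∧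
    ∀ s t, s ≠ t → Disjoint (P s).edgeSet (P t).edgeSet

/-!
For a vertex set `Z` avoiding `b`, the path or ray of the domination linkage starting at a vertex
of `S ∩ Z` must use an edge leaving `Z`: a path ending at `b` does so directly, and a dominating
path or ray that stays inside `Z` is followed by infinitely many edge-disjoint paths to `b`, which
use infinitely many edges leaving `Z`. So whenever only finitely many edges leave `Z`, at least
`|S ∩ Z|` of them do.

This cut condition gives the linkage by the augmenting-path proof of Menger's theorem. Take
`T ⊆ S` maximal such that some finite edge set is a unit flow from `T` to `b`. If `T ≠ S`, the set
`Z` of vertices reachable from `S \ T` in the residual graph cannot contain `b` (else the flow could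
be augmented), every edge leaving `Z` carries flow, and no flow edge enters `Z`; hence only
`|T ∩ Z| < |S ∩ Z|` edges leave `Z`. So `T = S`, and a unit flow decomposes into edge-disjoint paths.
-/

open Finset Relation

section

variable {V : Type*}

namespace List

theorem IsChain.rel_of_mem_zip_tail {R : V → V → Prop} :
    ∀ {L : List V}, L.IsChain R → ∀ {e : V × V}, e ∈ L.zip L.tail → R e.1 e.2
  | [], _, _, he => by simp at he
  | [_], _, _, he => by simp at he
  | a :: c :: l, h, e, he => by
    rw [isChain_cons_cons] at h
    rw [tail_cons, zip_cons_cons, mem_cons] at he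
    rcases he with rfl | he
    · exact h.1
    · exact h.2.rel_of_mem_zip_tail he

theorem sum_map_zip_tail_sub {G : Type*} [AddCommGroup G] (g : V → G) :
    ∀ (L : List V) (h : L ≠ []),
      ((L.zip L.tail).map fun e => g e.1 - g e.2).sum = g (L.head h) - g (L.getLast h)
  | [_], _ => by simp
  | a :: c :: l, _ => by
    have ih := sum_map_zip_tail_sub g (c :: l) (cons_ne_nil c l)
    rw [tail_cons, head_cons] at ih
    rw [tail_cons, zip_cons_cons, map_cons, sum_cons, ih, getLast_cons_cons, head_cons]
    abel

theorem exists_mem_zip_tail_of_head_mem_of_getLast_notMem {Z : Set V} :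
    ∀ (L : List V) (h : L ≠ []), L.head h ∈ Z → L.getLast h ∉ Z →
      ∃ e ∈ L.zip L.tail, e.1 ∈ Z ∧ e.2 ∉ Z
  | [_], _, ha, ha' => absurd ha ha'
  | a :: c :: l, _, ha, hl => by
    by_cases hc : c ∈ Z
    · obtain ⟨e, he, hZ⟩ := exists_mem_zip_tail_of_head_mem_of_getLast_notMem (c :: l)
        (cons_ne_nil c l) hc (by rwa [getLast_cons_cons] at hl)
      exact ⟨e, mem_cons_of_mem _ he, hZ⟩
    · exact ⟨(a, c), mem_cons_self, ha, hc⟩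

end List

def outBoundary (Adj : V → V → Prop) (Z : Set V) : Set (V × V) :=
  {e | Adj e.1 e.2 ∧ e.1 ∈ Z ∧ e.2 ∉ Z}

namespace DiPath

variable {R R' Adj : V → V → Prop}

def mapLe (hRR' : ∀ x y, R x y → R' x y) (P : DiPath R) : DiPath R' :=
  ⟨P.verts, P.ne, P.chain.imp fun x y => hRR' x y, P.nodup⟩

theorem rel_of_mem_edgeSet (P : DiPath R) {e : V × V} (he : e ∈ P.edgeSet) : R e.1 e.2 :=
  List.IsChain.rel_of_mem_zip_tail P.chain he

theorem edges_nodup (P : DiPath R) : P.edges.Nodup := by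
  refine List.Nodup.of_map Prod.snd ?_
  rw [edges, List.map_snd_zip (by simp)]
  exact P.nodup.sublist (List.tail_sublist _)

theorem exists_of_reflTransGen {a c : V} (h : ReflTransGen R a c) :
    ∃ P : DiPath R, P.first = a ∧ P.last = c := by
  induction h using ReflTransGen.head_induction_on with
  | refl => exact ⟨⟨[c], List.cons_ne_nil _ _, .singleton c, List.nodup_singleton c⟩, rfl, rfl⟩
  | @head a a' haa' _ ih =>
    obtain ⟨⟨L, hne, hch, hnd⟩, rfl, rfl⟩ := ih
    by_cases ha : a ∈ L
    · -- shortcut the path at its earlier visit of `a`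
      obtain ⟨l₁, l₂, rfl⟩ := List.append_of_mem ha
      refine ⟨⟨a :: l₂, List.cons_ne_nil _ _, hch.suffix (List.suffix_append _ _),
        hnd.sublist (List.sublist_append_right _ _)⟩, rfl, ?_⟩
      exact (List.getLast_append_of_ne_nil _ (List.cons_ne_nil _ _)).symm
    · exact ⟨⟨a :: L, List.cons_ne_nil _ _, hch.cons_of_ne_nil hne haa',
        List.nodup_cons.2 ⟨ha, hnd⟩⟩, rfl, List.getLast_cons hne⟩

theorem exists_mem_edgeSet_outBoundary (P : DiPath Adj) {Z : Set V} (h₁ : P.first ∈ Z)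
    (h₂ : P.last ∉ Z) : ∃ e ∈ P.edgeSet, e ∈ outBoundary Adj Z := by
  obtain ⟨e, he, hZ⟩ :=
    List.exists_mem_zip_tail_of_head_mem_of_getLast_notMem P.verts P.ne h₁ h₂
  exact ⟨e, he, P.rel_of_mem_edgeSet he, hZ⟩

end DiPath

section Crossing

variable {Adj : V → V → Prop} {Z : Set V}

theorem DiRay.exists_mem_edgeSet_outBoundary (R : DiRay Adj) (h₀ : R.first ∈ Z) {k : ℕ}
    (hk : R.f k ∉ Z) : ∃ e ∈ R.edgeSet, e ∈ outBoundary Adj Z := by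
  by_contra! h
  have hR : ∀ n, R.f n ∈ Z := by
    intro n
    induction n with
    | zero => exact h₀
    | succ n ih => exact by_contra fun hn => h _ ⟨n, rfl⟩ ⟨R.adj n, ih, hn⟩
  exact hk (hR k)

theorem outBoundary_infinite (P : ℕ → DiPath Adj)
    (hP : ∀ m n, m ≠ n → Disjoint (P m).edgeSet (P n).edgeSet)
    (h₁ : ∀ n, (P n).first ∈ Z) (h₂ : ∀ n, (P n).last ∉ Z) : (outBoundary Adj Z).Infinite := by
  choose e he using fun n => (P n).exists_mem_edgeSet_outBoundary (h₁ n) (h₂ n)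
  refine Set.infinite_of_injective_forall_mem (fun m n hmn => ?_) fun n => (he n).2
  by_contra hne
  exact Set.disjoint_left.1 (hP m n hne) (he m).1 (hmn ▸ (he n).1)

theorem PR.Good.exists_mem_edgeSet_outBoundary {b : V} {Q : PR Adj} (hQ : Q.Good b)
    (h₁ : Q.first ∈ Z) (hbZ : b ∉ Z) (hfin : (outBoundary Adj Z).Finite) :
    ∃ e ∈ Q.edgeSet, e ∈ outBoundary Adj Z := by
  cases Q with
  | path P =>
    by_cases hl : P.last ∈ Z
    · obtain hPb | ⟨D, -, hD₁, hD₂, hD⟩ := hQ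
      · exact absurd (hPb ▸ hl) hbZ
      · refine absurd hfin (outBoundary_infinite D hD (fun n => ?_) fun n => ?_)
        · rwa [hD₁ n]
        · rwa [hD₂ n]
    · exact P.exists_mem_edgeSet_outBoundary h₁ hl
  | ray R =>
    obtain ⟨D, -, hD₁, hD₂, hD⟩ := hQ
    by_cases hR : ∀ k, R.f k ∈ Z
    · refine absurd hfin (outBoundary_infinite D hD (fun n => ?_) fun n => ?_)
      · obtain ⟨k, hk⟩ := hD₁ n
        exact hk ▸ hR k
      · rwa [hD₂ n]
    · push Not at hR
      obtain ⟨k, hk⟩ := hR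
      exact R.exists_mem_edgeSet_outBoundary h₁ hk

end Crossing

def CutCondition (Adj : V → V → Prop) (b : V) (S : Finset V) : Prop :=
  ∀ (Z : Set V) [DecidablePred (· ∈ Z)], b ∉ Z → ∀ F : Finset (V × V),
    outBoundary Adj Z ⊆ F → #{s ∈ S | s ∈ Z} ≤ #F

theorem DomLinkage.cutCondition {Adj : V → V → Prop} {b : V} {I : Set V}
    (h : DomLinkage Adj b I) {S : Finset V} (hS : ↑S ⊆ I) : CutCondition Adj b S := by
  intro Z _ hbZ F hF
  obtain ⟨Q, hQ₁, hQ₂, hQ⟩ := h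
  have hcross (s : {s ∈ S | s ∈ Z}) :
      ∃ e ∈ F, e ∈ (Q ⟨s, hS (mem_filter.1 s.2).1⟩).edgeSet := by
    have hsZ : (Q ⟨s, hS (mem_filter.1 s.2).1⟩).first ∈ Z := by
      rw [hQ₁]
      exact (mem_filter.1 s.2).2
    obtain ⟨e, heQ, heZ⟩ :=
      (hQ₂ _).exists_mem_edgeSet_outBoundary hsZ hbZ (F.finite_toSet.subset hF)
    exact ⟨e, hF heZ, heQ⟩
  choose e heF heQ using hcross
  rw [← Fintype.card_coe, ← Fintype.card_coe F]
  refine Fintype.card_le_of_injective (fun s => ⟨e s, heF s⟩) fun s u hsu => ?_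
  have hsu : e s = e u := congrArg Subtype.val hsu
  by_contra hne
  exact Set.disjoint_left.1 (hQ _ _ fun h => hne (Subtype.ext (Subtype.mk.inj h)))
    (heQ s) (hsu ▸ heQ u)

section Flow

variable [DecidableEq V] {Adj : V → V → Prop} {b : V}

def netOut (f : Finset (V × V)) (x : V) : ℤ :=
  ∑ e ∈ f, ((if e.1 = x then 1 else 0) - if e.2 = x then 1 else 0)

theorem netOut_union {f g : Finset (V × V)} (h : Disjoint f g) (x : V) :
    netOut (f ∪ g) x = netOut f x + netOut g x :=
  sum_union h

theorem netOut_sdiff {f g : Finset (V × V)} (h : g ⊆ f) (x : V) :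
    netOut (f \ g) x = netOut f x - netOut g x :=
  sum_sdiff_eq_sub h

theorem netOut_image_swap (f : Finset (V × V)) (x : V) :
    netOut (f.image Prod.swap) x = -netOut f x := by
  rw [netOut, netOut, sum_image Prod.swap_injective.injOn, ← sum_neg_distrib]
  exact sum_congr rfl fun _ _ => (neg_sub _ _).symm

theorem sum_netOut_filter {f : Finset (V × V)} {A : Finset V} (hA : ∀ e ∈ f, e.1 ∈ A ∧ e.2 ∈ A)
    (Z : Set V) [DecidablePred (· ∈ Z)] :
    ∑ x ∈ A with x ∈ Z, netOut f x =
      ∑ e ∈ f, ((if e.1 ∈ Z then 1 else 0) - if e.2 ∈ Z then 1 else 0) := by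
  simp only [netOut]
  rw [sum_comm]
  refine sum_congr rfl fun e he => ?_
  rw [sum_sub_distrib, sum_ite_eq, sum_ite_eq]
  simp [(hA e he).1, (hA e he).2]

theorem DiPath.netOut_edges_toFinset {R : V → V → Prop} (P : DiPath R) (x : V) :
    netOut P.edges.toFinset x = (if P.first = x then 1 else 0) - if P.last = x then 1 else 0 := by
  rw [netOut, List.sum_toFinset _ P.edges_nodup]
  exact List.sum_map_zip_tail_sub (fun v => if v = x then (1 : ℤ) else 0) P.verts P.ne

variable (Adj b) in
/-- A `0/1`-valued flow from `T` to the sink `b`, encoded by the set `f` of edges carrying it. -/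
structure IsFlow (T : Finset V) (f : Finset (V × V)) : Prop where
  adj : ∀ e ∈ f, Adj e.1 e.2
  netOut_eq : ∀ x, x ≠ b → netOut f x = if x ∈ T then 1 else 0

theorem IsFlow.empty : IsFlow Adj b ∅ ∅ where
  adj := by simp
  netOut_eq := by simp [netOut]

namespace IsFlow

variable {T : Finset V} {f : Finset (V × V)}

theorem card_filter_eq (hf : IsFlow Adj b T f) {Z : Set V} [DecidablePred (· ∈ Z)]
    (hbZ : b ∉ Z) :
    (#{x ∈ T | x ∈ Z} : ℤ) = ∑ e ∈ f, ((if e.1 ∈ Z then 1 else 0) - if e.2 ∈ Z then 1 else 0) := by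
  set A := f.image Prod.fst ∪ f.image Prod.snd ∪ T
  have hA : ∀ e ∈ f, e.1 ∈ A ∧ e.2 ∈ A := fun e he =>
    ⟨by simp [A, mem_image_of_mem Prod.fst he], by simp [A, mem_image_of_mem Prod.snd he]⟩
  rw [← sum_netOut_filter hA, sum_congr rfl fun x hx => hf.netOut_eq x ?ne, sum_boole]
  · congr 2
    ext x
    simp only [mem_filter, A, mem_union]
    tauto
  · rintro rfl
    exact hbZ (mem_filter.1 hx).2

theorem reflTransGen (hf : IsFlow Adj b T f) {t : V} (ht : t ∈ T) :
    ReflTransGen (fun x y => (x, y) ∈ f) t b := by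
  classical
  by_contra hb
  set Z := {x | ReflTransGen (fun x y => (x, y) ∈ f) t x}
  have hpos : 0 < #{x ∈ T | x ∈ Z} := card_pos.2 ⟨t, mem_filter.2 ⟨ht, ReflTransGen.refl⟩⟩
  have hnonpos : ∑ e ∈ f, ((if e.1 ∈ Z then (1 : ℤ) else 0) - if e.2 ∈ Z then 1 else 0) ≤ 0 := by
    refine sum_nonpos fun e he => ?_
    by_cases h₁ : e.1 ∈ Z
    · have h₂ : e.2 ∈ Z := ReflTransGen.tail h₁ he
      simp [h₁, h₂]
    · simp only [h₁, if_false]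
      split_ifs <;> norm_num
  rw [← hf.card_filter_eq (Z := Z) hb] at hnonpos
  omega

theorem sdiff_edges {t : V} (hf : IsFlow Adj b (insert t T) f) (ht : t ∉ T)
    {P : DiPath fun x y => (x, y) ∈ f} (hP₁ : P.first = t) (hP₂ : P.last = b) :
    IsFlow Adj b T (f \ P.edges.toFinset) where
  adj e he := hf.adj e (mem_sdiff.1 he).1
  netOut_eq x hx := by
    rw [netOut_sdiff (fun e he => P.rel_of_mem_edgeSet (List.mem_toFinset.1 he)),
      hf.netOut_eq x hx, P.netOut_edges_toFinset, hP₁, hP₂, if_neg hx.symm]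
    rcases eq_or_ne t x with rfl | htx
    · simp [ht]
    · simp [htx, htx.symm]

theorem exists_paths (hbT : b ∉ T) (hf : IsFlow Adj b T f) :
    ∃ P : V → DiPath Adj, (∀ s ∈ T, (P s).first = s ∧ (P s).last = b ∧ (P s).edgeSet ⊆ f) ∧
      (T : Set V).PairwiseDisjoint fun s => (P s).edgeSet := by
  induction T using Finset.induction_on generalizing f with
  | empty =>
    exact ⟨fun v => ⟨[v], List.cons_ne_nil _ _, .singleton v, List.nodup_singleton v⟩,
      by simp, by simp⟩
  | @insert t T ht ih =>
    obtain ⟨Pt, hPt₁, hPt₂⟩ := DiPath.exists_of_reflTransGen (hf.reflTransGen (mem_insert_self t T))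
    obtain ⟨P, hP, hPdisj⟩ :=
      ih (fun h => hbT (mem_insert_of_mem h)) (hf.sdiff_edges ht hPt₁ hPt₂)
    have hPt_sub : Pt.edgeSet ⊆ f := fun e he => Pt.rel_of_mem_edgeSet he
    have hPt_disj (s : V) (hs : s ∈ T) : Disjoint Pt.edgeSet (P s).edgeSet :=
      Set.disjoint_left.2 fun e he he' =>
        (mem_sdiff.1 ((hP s hs).2.2 he')).2 (List.mem_toFinset.2 he)
    have hne (s : V) (hs : s ∈ T) : s ≠ t := fun h => ht (h ▸ hs)
    refine ⟨Function.update P t (Pt.mapLe fun x y h => hf.adj (x, y) h), ?_, ?_⟩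
    · rw [forall_mem_insert, Function.update_self]
      refine ⟨⟨hPt₁, hPt₂, hPt_sub⟩, fun s hs => ?_⟩
      obtain ⟨h₁, h₂, h₃⟩ := hP s hs
      rw [Function.update_of_ne (hne s hs)]
      exact ⟨h₁, h₂, h₃.trans (by simp)⟩
    · rw [coe_insert]
      refine Set.PairwiseDisjoint.insert ?_ fun s hs _ => ?_
      · refine hPdisj.mono_on fun s hs => ?_
        rw [Function.update_of_ne (hne s hs)]
      · rw [Function.update_self, Function.update_of_ne (hne s hs)]
        exact hPt_disj s hs

theorem finLinked (hbT : b ∉ T) (hf : IsFlow Adj b T f) : FinLinked Adj b T := by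
  obtain ⟨P, hP, hPdisj⟩ := hf.exists_paths hbT
  exact ⟨fun s => P s, fun s => (hP s s.2).1, fun s => (hP s s.2).2.1,
    fun s u hsu => hPdisj s.2 u.2 (Subtype.coe_injective.ne hsu)⟩

end IsFlow

variable (Adj) in
def residualAdj (f : Finset (V × V)) (x y : V) : Prop :=
  (Adj x y ∧ (x, y) ∉ f) ∨ (y, x) ∈ f

namespace IsFlow

variable {T : Finset V} {f : Finset (V × V)}

theorem augment (hf : IsFlow Adj b T f) (P : DiPath (residualAdj Adj f)) (hwT : P.first ∉ T)
    (hPb : P.last = b) : ∃ f', IsFlow Adj b (insert P.first T) f' := by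
  set E := P.edges.toFinset
  -- the edges of `P` that cancel an edge of `f`; the other edges of `P` are added to `f`
  set B := {e ∈ E | e.swap ∈ f}
  have hBE : B ⊆ E := filter_subset _ E
  have hBf : B.image Prod.swap ⊆ f := by
    intro e' he'
    obtain ⟨e, he, rfl⟩ := mem_image.1 he'
    exact (mem_filter.1 he).2
  have hfwd (e) (he : e ∈ E \ B) : Adj e.1 e.2 ∧ e ∉ f := by
    obtain ⟨heE, heB⟩ := mem_sdiff.1 he
    rcases P.rel_of_mem_edgeSet (List.mem_toFinset.1 heE) with h | h
    · exact h
    · exact absurd (mem_filter.2 ⟨heE, h⟩) heB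
  have hdisj : Disjoint (f \ B.image Prod.swap) (E \ B) :=
    disjoint_left.2 fun e h₁ h₂ => (hfwd e h₂).2 (mem_sdiff.1 h₁).1
  refine ⟨(f \ B.image Prod.swap) ∪ (E \ B), fun e he => ?_, fun x hx => ?_⟩
  · rcases mem_union.1 he with he | he
    · exact hf.adj e (mem_sdiff.1 he).1
    · exact (hfwd e he).1
  · rw [netOut_union hdisj, netOut_sdiff hBf, netOut_sdiff hBE, netOut_image_swap,
      P.netOut_edges_toFinset, hPb, hf.netOut_eq x hx, if_neg hx.symm]
    rcases eq_or_ne P.first x with rfl | hwx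
    · simp [hwT]
    · simp [hwx, hwx.symm]

end IsFlow

end Flow

section Menger

variable {Adj : V → V → Prop} {b : V} {S : Finset V}

theorem IsFlow.exists_insert [DecidableEq V] {T : Finset V} {f : Finset (V × V)}
    (hcut : CutCondition Adj b S) (hTS : T ⊂ S) (hf : IsFlow Adj b T f) :
    ∃ w ∈ S, w ∉ T ∧ ∃ f', IsFlow Adj b (insert w T) f' := by
  classical
  by_contra! hstuck
  set Z : Set V := {x | ∃ w ∈ S, w ∉ T ∧ ReflTransGen (residualAdj Adj f) w x}
  have hbZ : b ∉ Z := by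
    rintro ⟨w, hwS, hwT, hwb⟩
    obtain ⟨P, rfl, hPb⟩ := DiPath.exists_of_reflTransGen hwb
    obtain ⟨f', hf'⟩ := hf.augment P hwT hPb
    exact hstuck _ hwS hwT f' hf'
  have hZ (x y : V) (hxy : residualAdj Adj f x y) (hx : x ∈ Z) : y ∈ Z :=
    let ⟨w, hwS, hwT, hwx⟩ := hx
    ⟨w, hwS, hwT, hwx.tail hxy⟩
  let F := {e ∈ f | e.1 ∈ Z ∧ e.2 ∉ Z}
  have hF : outBoundary Adj Z ⊆ F := by
    rintro e ⟨hadj, h₁, h₂⟩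
    refine mem_filter.2 ⟨by_contra fun he => h₂ (hZ _ _ (Or.inl ⟨hadj, he⟩) h₁), h₁, h₂⟩
  -- no edge of `f` enters `Z`, so the flow leaving `Z` is carried by the edges of `F` alone
  have hFT : (#F : ℤ) = #{x ∈ T | x ∈ Z} := by
    rw [hf.card_filter_eq hbZ, card_filter]
    push_cast
    refine sum_congr rfl fun e he => ?_
    by_cases h₂ : e.2 ∈ Z
    · simp [h₂, hZ _ _ (Or.inr he) h₂]
    · simp [h₂]
  obtain ⟨v, hvS, hvT⟩ := exists_of_ssubset hTS
  have hlt : #{x ∈ T | x ∈ Z} < #{x ∈ S | x ∈ Z} := by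
    refine card_lt_card ⟨filter_subset_filter _ hTS.subset, fun h => hvT ?_⟩
    exact (mem_filter.1 (h (mem_filter.2 ⟨hvS, v, hvS, hvT, ReflTransGen.refl⟩))).1
  have := hcut Z hbZ F hF
  omega

theorem finLinked_of_cutCondition (hbS : b ∉ S) (hcut : CutCondition Adj b S) :
    FinLinked Adj b S := by
  classical
  obtain ⟨T, hT, hmax⟩ := exists_max_image {T ∈ S.powerset | ∃ f, IsFlow Adj b T f} card
    ⟨∅, mem_filter.2 ⟨empty_mem_powerset S, ∅, IsFlow.empty⟩⟩
  obtain ⟨hTS, f, hf⟩ := mem_filter.1 hT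
  obtain rfl | hTS := (mem_powerset.1 hTS).eq_or_ssubset
  · exact hf.finLinked hbS
  · obtain ⟨w, hwS, hwT, f', hf'⟩ := hf.exists_insert hcut hTS
    have := hmax (insert w T)
      (mem_filter.2 ⟨mem_powerset.2 (insert_subset hwS hTS.subset), f', hf'⟩)
    rw [card_insert_of_notMem hwT] at this
    omega

end Menger

end

theorem stmt0 {V : Type*} (Adj : V → V → Prop) (b : V) (I : Set V) (hb : b ∉ I)
    (h : DomLinkage Adj b I) :
    ∀ S : Finset V, ↑S ⊆ I → FinLinked Adj b S :=
  fun _ hS => finLinked_of_cutCondition (fun hbS => hb (hS hbS)) (h.cutCondition hS)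
end

section
/- Let G be a digraph with vertex b and vertex set I ⊆ V(G) \ {b} such that every finite subset of I can be linked to b by edge-disjoint directed paths. If D and D' are exact vertex sets (i.e., b ∉ D, the number of D-crossing edges is finite and equals |D ∩ I|, and similarly for D'), then D ∪ D' is exact. -/
/-- The set of `D`-crossing edges: edges with tail in `D` and head outside `D`. -/
def Cross {V : Type*} (Adj : V → V → Prop) (D : Set V) : Set (V × V) :=
  {e | Adj e.1 e.2 ∧ e.1 ∈ D ∧ e.2 ∉ D}

/-- `D` is exact (for `I` and `b`): `b ∉ D` and the number of `D`-crossing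
edges is finite and equals `|D ∩ I|`. -/
def Exact {V : Type*} (Adj : V → V → Prop) (b : V) (I D : Set V) : Prop :=
  b ∉ D ∧ (Cross Adj D).Finite ∧ (D ∩ I).Finite ∧
    (Cross Adj D).ncard = (D ∩ I).ncard


/-! Every vertex of `I` inside a set `D` with `b ∉ D` needs its own crossing edge on an
edge-disjoint linkage to `b`, so `|D ∩ I|` is at most the order of `D` for every such `D`.
The order is submodular, while `X ↦ |X ∩ I|` is modular; hence
`|D ∩ I| + |D' ∩ I| = |(D ∪ D') ∩ I| + |(D ∩ D') ∩ I|
  ≤ order (D ∪ D') + order (D ∩ D') ≤ order D + order D'`,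
and exactness of `D` and `D'` turns all these inequalities into equalities. -/

open Finset

theorem List.exists_mem_zip_tail_of_isChain {α : Type*} {r : α → α → Prop} {p : α → Prop} :
    ∀ (l : List α) (h : l ≠ []), l.IsChain r → p (l.head h) → ¬ p (l.getLast h) →
      ∃ e ∈ l.zip l.tail, r e.1 e.2 ∧ p e.1 ∧ ¬ p e.2
  | [a], _, _, ha, hna => absurd ha hna
  | a :: c :: l, _, hl, ha, hlast => by
    rw [List.isChain_cons_cons] at hl
    by_cases hc : p c
    · obtain ⟨e, he, hre⟩ := exists_mem_zip_tail_of_isChain (c :: l) (List.cons_ne_nil _ _)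
        hl.2 hc (by rwa [List.getLast_cons (List.cons_ne_nil _ _)] at hlast)
      exact ⟨e, List.mem_cons_of_mem _ he, hre⟩
    · exact ⟨(a, c), List.mem_cons_self, hl.1, ha, hc⟩

theorem Set.finite_and_ncard_le_of_forall_finset_card_le {α : Type*} {s : Set α} {n : ℕ}
    (h : ∀ t : Finset α, ↑t ⊆ s → #t ≤ n) : s.Finite ∧ s.ncard ≤ n := by
  have hs : s.Finite := by
    by_contra hinf
    obtain ⟨t, hts, ht⟩ := Set.Infinite.exists_subset_card_eq hinf (n + 1)
    have := h t hts
    omega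
  refine ⟨hs, ?_⟩
  rw [Set.ncard_eq_toFinset_card s hs]
  exact h _ (by simp)

theorem Set.ncard_add_ncard_le_of_union_subset_of_inter_subset {α : Type*} {s t u v : Set α}
    (hu : u.Finite) (hv : v.Finite) (hunion : s ∪ t ⊆ u ∪ v) (hinter : s ∩ t ⊆ u ∩ v) :
    s.ncard + t.ncard ≤ u.ncard + v.ncard := by
  have huv := hu.union hv
  have hs : s.Finite := huv.subset (Set.subset_union_left.trans hunion)
  have ht : t.Finite := huv.subset (Set.subset_union_right.trans hunion)
  rw [← Set.ncard_union_add_ncard_inter s t hs ht, ← Set.ncard_union_add_ncard_inter u v hu hv]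
  exact Nat.add_le_add (Set.ncard_le_ncard hunion huv)
    (Set.ncard_le_ncard hinter (hu.inter_of_left v))

section Cross

variable {V : Type*} {Adj : V → V → Prop}

theorem DiPath.exists_mem_edgeSet_cross {D : Set V} (P : DiPath Adj) (hfirst : P.first ∈ D)
    (hlast : P.last ∉ D) : ∃ e ∈ P.edgeSet, e ∈ Cross Adj D :=
  List.exists_mem_zip_tail_of_isChain P.verts P.ne P.chain hfirst hlast

theorem cross_union_subset (D D' : Set V) :
    Cross Adj (D ∪ D') ⊆ Cross Adj D ∪ Cross Adj D' := by
  rintro e ⟨hadj, hD | hD', hout⟩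
  · exact Or.inl ⟨hadj, hD, fun h => hout (Or.inl h)⟩
  · exact Or.inr ⟨hadj, hD', fun h => hout (Or.inr h)⟩

theorem cross_inter_subset (D D' : Set V) :
    Cross Adj (D ∩ D') ⊆ Cross Adj D ∪ Cross Adj D' := by
  rintro e ⟨hadj, ⟨hD, hD'⟩, hout⟩
  by_cases h : e.2 ∈ D
  · exact Or.inr ⟨hadj, hD', fun h' => hout ⟨h, h'⟩⟩
  · exact Or.inl ⟨hadj, hD, h⟩

theorem cross_union_inter_cross_inter_subset (D D' : Set V) :
    Cross Adj (D ∪ D') ∩ Cross Adj (D ∩ D') ⊆ Cross Adj D ∩ Cross Adj D' := by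
  rintro e ⟨⟨hadj, -, hout⟩, -, ⟨hD, hD'⟩, -⟩
  exact ⟨⟨hadj, hD, fun h => hout (Or.inl h)⟩, ⟨hadj, hD', fun h => hout (Or.inr h)⟩⟩

theorem ncard_cross_union_add_ncard_cross_inter_le {D D' : Set V}
    (hD : (Cross Adj D).Finite) (hD' : (Cross Adj D').Finite) :
    (Cross Adj (D ∪ D')).ncard + (Cross Adj (D ∩ D')).ncard ≤
      (Cross Adj D).ncard + (Cross Adj D').ncard :=
  Set.ncard_add_ncard_le_of_union_subset_of_inter_subset hD hD'
    (Set.union_subset (cross_union_subset D D') (cross_inter_subset D D'))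
    (cross_union_inter_cross_inter_subset D D')

theorem FinLinked.card_le_ncard_cross {b : V} {S : Finset V} {D : Set V}
    (hS : FinLinked Adj b S) (hSD : ↑S ⊆ D) (hb : b ∉ D) (hfin : (Cross Adj D).Finite) :
    #S ≤ (Cross Adj D).ncard := by
  obtain ⟨P, hfirst, hlast, hdisj⟩ := hS
  have hcross (s : S) : ∃ e ∈ (P s).edgeSet, e ∈ Cross Adj D :=
    (P s).exists_mem_edgeSet_cross (hfirst s ▸ hSD s.2) (hlast s ▸ hb)
  choose e he heD using hcross
  have hinj : Function.Injective fun s => (⟨e s, heD s⟩ : Cross Adj D) := by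
    intro s t hst
    have hst : e s = e t := congrArg Subtype.val hst
    by_contra hne
    exact Set.disjoint_left.mp (hdisj s t hne) (he s) (hst ▸ he t)
  have := hfin.to_subtype
  simpa [Nat.card_eq_finsetCard, Nat.card_coe_set_eq] using Nat.card_le_card_of_injective _ hinj

theorem finite_inter_and_ncard_inter_le_ncard_cross {b : V} {I D : Set V}
    (hlink : ∀ S : Finset V, ↑S ⊆ I → FinLinked Adj b S) (hb : b ∉ D)
    (hfin : (Cross Adj D).Finite) :
    (D ∩ I).Finite ∧ (D ∩ I).ncard ≤ (Cross Adj D).ncard :=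
  Set.finite_and_ncard_le_of_forall_finset_card_le fun S hS =>
    (hlink S (hS.trans Set.inter_subset_right)).card_le_ncard_cross
      (hS.trans Set.inter_subset_left) hb hfin

end Cross

theorem stmt1_general {V : Type*} (Adj : V → V → Prop) (b : V) (I : Set V)
    (hlink : ∀ S : Finset V, ↑S ⊆ I → FinLinked Adj b S)
    (D D' : Set V) (hD : Exact Adj b I D) (hD' : Exact Adj b I D') :
    Exact Adj b I (D ∪ D') := by
  obtain ⟨hbD, hCD, hID, hcardD⟩ := hD
  obtain ⟨hbD', hCD', hID', hcardD'⟩ := hD'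
  have hbu : b ∉ D ∪ D' := fun h => h.elim hbD hbD'
  have hCu : (Cross Adj (D ∪ D')).Finite := (hCD.union hCD').subset (cross_union_subset D D')
  have hCi : (Cross Adj (D ∩ D')).Finite := (hCD.union hCD').subset (cross_inter_subset D D')
  obtain ⟨hIu, hle_union⟩ := finite_inter_and_ncard_inter_le_ncard_cross hlink hbu hCu
  obtain ⟨-, hle_inter⟩ :=
    finite_inter_and_ncard_inter_le_ncard_cross hlink (fun h => hbD h.1) hCi
  have hmodular : ((D ∪ D') ∩ I).ncard + ((D ∩ D') ∩ I).ncard =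
      (D ∩ I).ncard + (D' ∩ I).ncard := by
    rw [Set.union_inter_distrib_right, Set.inter_inter_distrib_right,
      Set.ncard_union_add_ncard_inter _ _ hID hID']
  have hsubmodular := ncard_cross_union_add_ncard_cross_inter_le (Adj := Adj) hCD hCD'
  exact ⟨hbu, hCu, hIu, by omega⟩

theorem stmt1 {V : Type*} (Adj : V → V → Prop) (b : V) (I : Set V) (hb : b ∉ I)
    (hlink : ∀ S : Finset V, ↑S ⊆ I → FinLinked Adj b S)
    (D D' : Set V) (hD : Exact Adj b I D) (hD' : Exact Adj b I D') :
    Exact Adj b I (D ∪ D') :=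
  stmt1_general Adj b I hlink D D' hD hD'
end

section
/- Let G be a digraph with vertex b and vertex set I ⊆ V(G) \ {b} such that every finite subset of I can be linked to b by edge-disjoint directed paths. If D and D' are exact vertex sets, then D ∩ D' is exact. -/
lemma crossList {V : Type*} {Adj : V → V → Prop} {W : Set V} :
    ∀ (l : List V), l.Chain' Adj → ∀ (hne : l ≠ []), l.head hne ∈ W →
      l.getLast hne ∉ W → ∃ e ∈ l.zip l.tail, Adj e.1 e.2 ∧ e.1 ∈ W ∧ e.2 ∉ W
  | [], _, hne, _, _ => absurd rfl hne
  | [a], _, _, h1, h2 => absurd h1 h2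
  | a :: c :: t, hc, _, h1, h2 => by
      by_cases hcW : c ∈ W
      · obtain ⟨e, he, h⟩ := crossList (c :: t) (List.isChain_cons_cons.mp hc).2 (by simp) hcW
          (by simpa [List.getLast_cons] using h2)
        exact ⟨e, by simpa using Or.inr he, h⟩
      · exact ⟨(a, c), by simp, (List.isChain_cons_cons.mp hc).1, h1, hcW⟩

lemma path_cross {V : Type*} {Adj : V → V → Prop} {W : Set V} (P : DiPath Adj)
    (h1 : P.first ∈ W) (h2 : P.last ∉ W) :
    ∃ e ∈ P.edgeSet, e ∈ Cross Adj W := by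
  obtain ⟨e, he, ha, hw1, hw2⟩ := crossList P.verts P.chain P.ne h1 h2
  exact ⟨e, he, ha, hw1, hw2⟩

lemma lower_bound {V : Type*} {Adj : V → V → Prop} {b : V} {I : Set V}
    (hlink : ∀ S : Finset V, ↑S ⊆ I → FinLinked Adj b S)
    (W : Set V) (hbW : b ∉ W) (hWfin : (Cross Adj W).Finite) (hWI : (W ∩ I).Finite) :
    (W ∩ I).ncard ≤ (Cross Adj W).ncard := by
  classical
  set S : Finset V := hWI.toFinset with hS
  have hSI : (↑S : Set V) ⊆ I := by
    rw [hS, Set.Finite.coe_toFinset]; exact Set.inter_subset_right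
  obtain ⟨P, hfirst, hlast, hdisj⟩ := hlink S hSI
  have key : ∀ s : S, ∃ e, e ∈ (P s).edgeSet ∧ e ∈ Cross Adj W := by
    intro s
    have hmem : (s : V) ∈ W ∩ I := hWI.mem_toFinset.mp s.2
    obtain ⟨e, he, hc⟩ := path_cross (P s) (by rw [hfirst]; exact hmem.1)
      (by rw [hlast]; exact hbW)
    exact ⟨e, he, hc⟩
  choose c hc1 hc2 using key
  have hcinj : Function.Injective c := by
    intro s t h
    by_contra hne
    exact Set.disjoint_left.mp (hdisj s t hne) (hc1 s) (h ▸ hc1 t)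
  haveI : Finite ↥(Cross Adj W) := hWfin.to_subtype
  have hinj : Function.Injective (fun s : S => (⟨c s, hc2 s⟩ : ↥(Cross Adj W))) := by
    intro s t h
    exact hcinj (congrArg Subtype.val h)
  calc (W ∩ I).ncard = S.card := Set.ncard_eq_toFinset_card _ hWI
    _ = Nat.card S := (Nat.card_eq_finsetCard S).symm
    _ ≤ Nat.card ↥(Cross Adj W) := Nat.card_le_card_of_injective _ hinj
    _ = (Cross Adj W).ncard := Nat.card_coe_set_eq _

theorem stmt2 {V : Type*} (Adj : V → V → Prop) (b : V) (I : Set V) (hb : b ∉ I)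
    (hlink : ∀ S : Finset V, ↑S ⊆ I → FinLinked Adj b S)
    (D D' : Set V) (hD : Exact Adj b I D) (hD' : Exact Adj b I D') :
    Exact Adj b I (D ∩ D') := by
  obtain ⟨hbD, hCD, hDI, hcardD⟩ := hD
  obtain ⟨hbD', hCD', hDI', hcardD'⟩ := hD'
  -- subset facts for cross sets
  have hsubI : Cross Adj (D ∩ D') ⊆ Cross Adj D ∪ Cross Adj D' := by
    rintro ⟨x, y⟩ ⟨ha, hx, hy⟩
    by_cases hyD : y ∈ D
    · exact Or.inr ⟨ha, hx.2, fun hyD' => hy ⟨hyD, hyD'⟩⟩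
    · exact Or.inl ⟨ha, hx.1, hyD⟩
  have hsubU : Cross Adj (D ∪ D') ⊆ Cross Adj D ∪ Cross Adj D' := by
    rintro ⟨x, y⟩ ⟨ha, hx, hy⟩
    rcases hx with hx | hx
    · exact Or.inl ⟨ha, hx, fun h => hy (Or.inl h)⟩
    · exact Or.inr ⟨ha, hx, fun h => hy (Or.inr h)⟩
  -- submodularity-style inclusions
  have hsub2 : Cross Adj (D ∩ D') ∩ Cross Adj (D ∪ D') ⊆ Cross Adj D ∩ Cross Adj D' := by
    rintro ⟨x, y⟩ ⟨⟨ha, hx, _⟩, ⟨_, _, hy⟩⟩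
    exact ⟨⟨ha, hx.1, fun h => hy (Or.inl h)⟩, ⟨ha, hx.2, fun h => hy (Or.inr h)⟩⟩
  have hCDD' : (Cross Adj D ∪ Cross Adj D').Finite := hCD.union hCD'
  have hCI : (Cross Adj (D ∩ D')).Finite := hCDD'.subset hsubI
  have hCU : (Cross Adj (D ∪ D')).Finite := hCDD'.subset hsubU
  have hII : ((D ∩ D') ∩ I).Finite := hDI.subset (by intro x hx; exact ⟨hx.1.1, hx.2⟩)
  have hUI : ((D ∪ D') ∩ I).Finite := by
    have : (D ∪ D') ∩ I = (D ∩ I) ∪ (D' ∩ I) := by ext x; simp only [Set.mem_inter_iff, Set.mem_union]; tauto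
    rw [this]; exact hDI.union hDI'
  -- set identities for the I-parts
  have hIeq : (D ∩ D') ∩ I = (D ∩ I) ∩ (D' ∩ I) := by ext x; simp only [Set.mem_inter_iff, Set.mem_union]; tauto
  have hUeq : (D ∪ D') ∩ I = (D ∩ I) ∪ (D' ∩ I) := by ext x; simp only [Set.mem_inter_iff, Set.mem_union]; tauto
  -- cardinal arithmetic
  have hsum1 : ((D ∪ D') ∩ I).ncard + ((D ∩ D') ∩ I).ncard = (D ∩ I).ncard + (D' ∩ I).ncard := by
    rw [hIeq, hUeq]; exact Set.ncard_union_add_ncard_inter _ _ hDI hDI'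
  have hsum2 : (Cross Adj (D ∩ D')).ncard + (Cross Adj (D ∪ D')).ncard ≤
      (Cross Adj D).ncard + (Cross Adj D').ncard := by
    have e1 : (Cross Adj (D ∩ D') ∪ Cross Adj (D ∪ D')).ncard +
        (Cross Adj (D ∩ D') ∩ Cross Adj (D ∪ D')).ncard =
        (Cross Adj (D ∩ D')).ncard + (Cross Adj (D ∪ D')).ncard :=
      Set.ncard_union_add_ncard_inter _ _ hCI hCU
    have e2 : (Cross Adj D ∪ Cross Adj D').ncard + (Cross Adj D ∩ Cross Adj D').ncard =
        (Cross Adj D).ncard + (Cross Adj D').ncard :=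
      Set.ncard_union_add_ncard_inter _ _ hCD hCD'
    have le1 : (Cross Adj (D ∩ D') ∪ Cross Adj (D ∪ D')).ncard ≤
        (Cross Adj D ∪ Cross Adj D').ncard :=
      Set.ncard_le_ncard (Set.union_subset hsubI hsubU) hCDD'
    have le2 : (Cross Adj (D ∩ D') ∩ Cross Adj (D ∪ D')).ncard ≤
        (Cross Adj D ∩ Cross Adj D').ncard :=
      Set.ncard_le_ncard hsub2 (hCD.inter_of_left _)
    omega
  have lb1 : ((D ∩ D') ∩ I).ncard ≤ (Cross Adj (D ∩ D')).ncard :=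
    lower_bound hlink _ (fun h => hbD h.1) hCI hII
  have lb2 : ((D ∪ D') ∩ I).ncard ≤ (Cross Adj (D ∪ D')).ncard :=
    lower_bound hlink _ (fun h => h.elim hbD hbD') hCU hUI
  refine ⟨fun h => hbD h.1, hCI, hII, ?_⟩
  omega
end

section
/- Let G be a digraph with vertex b, I ⊆ V(G) \ {b} such that every finite subset of I admits a linkage of edge-disjoint directed paths to b. Let D be exact and let P_1, …, P_n be a linkage from I ∩ D to b (so n = |I ∩ D|). Then each P_i contains exactly one D-crossing edge, and each D-crossing edge lies on exactly one of the P_i. -/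
lemma exists_cross_aux {V : Type*} {Adj : V → V → Prop} {D : Set V} :
    ∀ (l : List V) (h : l ≠ []), l.Chain' Adj → l.head h ∈ D → l.getLast h ∉ D →
      ∃ e ∈ l.zip l.tail, Adj e.1 e.2 ∧ e.1 ∈ D ∧ e.2 ∉ D
  | [], h, _, _, _ => absurd rfl h
  | [a], _, _, h1, h2 => absurd h1 h2
  | a :: b :: t, _, hc, h1, h2 => by
    by_cases hbD : b ∈ D
    · obtain ⟨e, he, hp⟩ := exists_cross_aux (b :: t) (by simp) hc.tail hbD
        (by simpa [List.getLast_cons] using h2)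
      refine ⟨e, List.mem_cons_of_mem _ (by simpa [List.zip] using he), hp⟩
    · exact ⟨(a, b), by simp [List.zip], hc.rel_head, h1, hbD⟩

theorem stmt4 {V : Type*} (Adj : V → V → Prop) (b : V) (I : Set V) (hb : b ∉ I)
    (hlink : ∀ S : Finset V, ↑S ⊆ I → FinLinked Adj b S)
    (D : Set V) (hD : Exact Adj b I D)
    (P : ↥(I ∩ D) → DiPath Adj)
    (hfirst : ∀ s, (P s).first = (s : V)) (hlast : ∀ s, (P s).last = b)
    (hdisj : ∀ s t, s ≠ t → Disjoint (P s).edgeSet (P t).edgeSet) :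
    (∀ s, ∃! e : V × V, e ∈ (P s).edges ∧ e ∈ Cross Adj D) ∧
    (∀ e ∈ Cross Adj D, ∃! s, e ∈ (P s).edges) := by
  classical
  -- each path has at least one crossing edge
  have hex : ∀ s, ∃ e ∈ (P s).edges, e ∈ Cross Adj D := by
    intro s
    have h1 : (P s).verts.head (P s).ne ∈ D := by
      have := hfirst s
      rw [DiPath.first] at this
      rw [this]; exact s.2.2
    have h2 : (P s).verts.getLast (P s).ne ∉ D := by
      have := hlast s
      rw [DiPath.last] at this
      rw [this]; exact hD.1
    obtain ⟨e, he, hp⟩ := exists_cross_aux (P s).verts (P s).ne (P s).chain h1 h2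
    exact ⟨e, he, hp⟩
  choose g hg1 hg2 using hex
  -- g is injective
  have hginj : Function.Injective g := by
    intro s t hst
    by_contra hne
    have := (hdisj s t hne).ne_of_mem (hg1 s) (hg1 t)
    exact this hst
  have hrange : Set.range g ⊆ Cross Adj D := by
    rintro _ ⟨s, rfl⟩; exact hg2 s
  have hcardID : (I ∩ D).ncard = (D ∩ I).ncard := by rw [Set.inter_comm]
  have hcard : (Set.range g).ncard = (Cross Adj D).ncard := by
    rw [← Nat.card_coe_set_eq, Nat.card_range_of_injective hginj,
      Nat.card_coe_set_eq, hcardID, ← hD.2.2.2]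
  have hrangeq : Set.range g = Cross Adj D :=
    Set.eq_of_subset_of_ncard_le hrange (le_of_eq hcard.symm) hD.2.1
  -- each edge lies on at most one path
  have huniq : ∀ (e : V × V) (s t : ↥(I ∩ D)), e ∈ (P s).edges → e ∈ (P t).edges → s = t := by
    intro e s t hs ht
    by_contra hne
    exact (hdisj s t hne).ne_of_mem hs ht rfl
  constructor
  · intro s
    refine ⟨g s, ⟨hg1 s, hg2 s⟩, ?_⟩
    rintro e ⟨hes, hec⟩
    have : e ∈ Set.range g := hrangeq ▸ hec
    obtain ⟨t, rfl⟩ := this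
    have := huniq (g t) t s (hg1 t) hes
    rw [this]
  · intro e he
    have : e ∈ Set.range g := hrangeq ▸ he
    obtain ⟨s, rfl⟩ := this
    exact ⟨s, hg1 s, fun t ht => huniq (g s) t s ht (hg1 s)⟩
end

section
/- Let G be a digraph with vertex b and I ⊆ V(G) \ {b} such that every finite subset of I admits an edge-disjoint linkage to b. Then there is no strictly increasing sequence (D_n)_{n∈ℕ} of exact vertex sets, each equal to its hull, all of whose orders are bounded by a common constant. -/
/-- The hull of `D`: the set of vertices `v` such that every directed `v`–`b`
path contains a `D`-crossing edge. -/
def hull {V : Type*} (Adj : V → V → Prop) (b : V) (D : Set V) : Set V :=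
  {v | ∀ P : DiPath Adj, P.first = v → P.last = b → ∃ e ∈ P.edges, e ∈ Cross Adj D}

/-!
By exactness the orders equal `|D n ∩ I|`, which is monotone and bounded, hence constant from
some `N` on. Link `T = D N ∩ I` to `b` by edge-disjoint paths: every later `D n` contains `T`
but not `b`, so each path uses a `D n`-crossing edge, and since there are only `|T|` of those,
all crossing edges of `D n` lie on these finitely many paths. A set equal to its hull is
determined by its crossing edges, so infinitely many distinct `D n` would have to have
distinct crossing sets inside one finite edge set.
-/

theorem Nat.exists_forall_ge_eq_of_monotone_of_le {f : ℕ → ℕ} (hf : Monotone f) {k : ℕ}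
    (hk : ∀ n, f n ≤ k) : ∃ N, ∀ n, N ≤ n → f n = f N := by
  let g : ℕ →o Fin (k + 1) := ⟨fun n => ⟨f n, Nat.lt_succ_of_le (hk n)⟩, fun _ _ h => hf h⟩
  obtain ⟨N, hN⟩ := WellFoundedGT.monotone_chain_condition g
  exact ⟨N, fun n hn => congrArg Fin.val (hN n hn).symm⟩

theorem List.exists_mem_zip_tail_of_head_mem_of_getLast_notMem_s7 {α : Type*} {R : α → α → Prop}
    {p : α → Prop} : ∀ {l : List α}, l.IsChain R → (hne : l ≠ []) →
      p (l.head hne) → ¬ p (l.getLast hne) → ∃ e ∈ l.zip l.tail, R e.1 e.2 ∧ p e.1 ∧ ¬ p e.2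
  | [_], _, _, hhead, hlast => absurd hhead hlast
  | a :: c :: l, hl, _, hhead, hlast => by
    obtain ⟨hac, hcl⟩ := List.isChain_cons_cons.mp hl
    by_cases hc : p c
    · obtain ⟨e, he, hRe⟩ :=
        exists_mem_zip_tail_of_head_mem_of_getLast_notMem_s7 hcl (List.cons_ne_nil c l) hc
          (by simpa using hlast)
      exact ⟨e, List.mem_cons_of_mem _ he, hRe⟩
    · exact ⟨(a, c), List.mem_cons_self, hac, hhead, hc⟩

namespace DiPath

variable {V : Type*} {Adj : V → V → Prop}

theorem exists_mem_edges_cross (P : DiPath Adj) {D : Set V} (hfirst : P.first ∈ D)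
    (hlast : P.last ∉ D) : ∃ e ∈ P.edges, e ∈ Cross Adj D :=
  List.exists_mem_zip_tail_of_head_mem_of_getLast_notMem_s7 P.chain P.ne hfirst hlast

theorem cross_subset_iUnion_edgeSet {ι : Type*} [Finite ι] {D : Set V}
    (hfin : (Cross Adj D).Finite) (hcard : (Cross Adj D).ncard ≤ Nat.card ι) (P : ι → DiPath Adj)
    (hfirst : ∀ i, (P i).first ∈ D) (hlast : ∀ i, (P i).last ∉ D)
    (hdisj : Pairwise fun i j => Disjoint (P i).edgeSet (P j).edgeSet) :
    Cross Adj D ⊆ ⋃ i, (P i).edgeSet := by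
  choose c hc hcross using fun i => (P i).exists_mem_edges_cross (hfirst i) (hlast i)
  have hinj : Function.Injective c := fun i j hij => by
    by_contra hne
    exact Set.disjoint_left.mp (hdisj hne) (hc i) (hij ▸ hc j)
  have hrange : Set.range c = Cross Adj D :=
    Set.eq_of_subset_of_ncard_le (Set.range_subset_iff.2 hcross)
      (by rwa [Set.ncard_range_of_injective hinj]) hfin
  rw [← hrange]
  rintro _ ⟨i, rfl⟩
  exact Set.mem_iUnion.2 ⟨i, hc i⟩

end DiPath

theorem injOn_cross_setOf_hull_eq_self {V : Type*} (Adj : V → V → Prop) (b : V) :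
    Set.InjOn (Cross Adj) {D | hull Adj b D = D} := fun D hD D' hD' h => by
  rw [← Set.mem_ofPred.mp hD, ← Set.mem_ofPred.mp hD', hull, hull, h]

theorem stmt7_general {V : Type*} (Adj : V → V → Prop) (b : V) (I : Set V)
    (hlink : ∀ S : Finset V, ↑S ⊆ I → FinLinked Adj b S) :
    ¬ ∃ D : ℕ → Set V,
      (∀ n, Exact Adj b I (D n)) ∧ (∀ n, hull Adj b (D n) = D n) ∧
      (∀ n, D n ⊂ D (n + 1)) ∧ ∃ k : ℕ, ∀ n, (Cross Adj (D n)).ncard ≤ k := by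
  rintro ⟨D, hex, hhull, hssub, k, hk⟩
  have hmono : StrictMono D := strictMono_nat_of_lt_succ hssub
  have hcardI (n : ℕ) : (Cross Adj (D n)).ncard = (D n ∩ I).ncard := (hex n).2.2.2
  obtain ⟨N, hN⟩ := Nat.exists_forall_ge_eq_of_monotone_of_le
    (fun m n h => Set.ncard_le_ncard (Set.inter_subset_inter_left I (hmono.monotone h))
      (hex n).2.2.1)
    (fun n => hcardI n ▸ hk n)
  set T := (hex N).2.2.1.toFinset
  obtain ⟨P, hPfirst, hPlast, hPdisj⟩ := hlink T (by simp [T])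
  have hsub (n : ℕ) : Cross Adj (D (N + n)) ⊆ ⋃ s, (P s).edgeSet := by
    refine DiPath.cross_subset_iUnion_edgeSet (hex _).2.1 ?_ P (fun s => ?_)
      (fun s => (hPlast s).symm ▸ (hex _).1) hPdisj
    · rw [hcardI, hN _ (Nat.le_add_right N n), Nat.card_eq_finsetCard,
        Set.ncard_eq_toFinset_card _ (hex N).2.2.1]
    · rw [hPfirst s]
      exact hmono.monotone (Nat.le_add_right N n) ((hex N).2.2.1.mem_toFinset.mp s.2).1
  have hfin : (⋃ s, (P s).edgeSet).Finite := Set.finite_iUnion fun s => (P s).edges.finite_toSet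
  have hinj : Function.Injective fun n => Cross Adj (D (N + n)) := fun m n h =>
    Nat.add_left_cancel <|
      hmono.injective (injOn_cross_setOf_hull_eq_self Adj b (hhull _) (hhull _) h)
  exact Set.infinite_of_injective_forall_mem hinj hsub hfin.finite_subsets

theorem stmt7 {V : Type*} (Adj : V → V → Prop) (b : V) (I : Set V) (hb : b ∉ I)
    (hlink : ∀ S : Finset V, ↑S ⊆ I → FinLinked Adj b S) :
    ¬ ∃ D : ℕ → Set V,
      (∀ n, Exact Adj b I (D n)) ∧ (∀ n, hull Adj b (D n) = D n) ∧
      (∀ n, D n ⊂ D (n + 1)) ∧ ∃ k : ℕ, ∀ n, (Cross Adj (D n)).ncard ≤ k :=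
  stmt7_general Adj b I hlink
end
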